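/- Let X be a standard normal random variable truncated to the interval (-√ρ, √ρ) for some ρ > 0, scaled by √λ for λ > 0 (i.e., X has density proportional to λ^{-1/2}φ(λ^{-1/2}x) on |x| < √ρ). Then E(λ^{-1}X²) is nonincreasing as a function of λ. -/

import Mathlib

/-- Standard normal density. -/
noncomputable def stdPhi (t : ℝ) : ℝ := (Real.sqrt (2 * Real.pi))⁻¹ * Real.exp (-(t ^ 2) / 2)

lemma stdPhi_cont : Continuous stdPhi := by
  unfold stdPhi; fun_prop

lemma stdPhi_pos (t : ℝ) : 0 < stdPhi t := by
  unfold stdPhi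
  positivity

/-- Numerator integral. -/
noncomputable def Nfun (t : ℝ) : ℝ := ∫ u in Set.Ioo (-t) t, u ^ 2 * stdPhi u

/-- Denominator integral. -/
noncomputable def Dfun (t : ℝ) : ℝ := ∫ u in Set.Ioo (-t) t, stdPhi u

lemma integrableOn_phi (s : Set ℝ) (hs : MeasurableSet s) (a : ℝ)
    (hsub : s ⊆ Set.Icc (-a) a) : MeasureTheory.IntegrableOn stdPhi s := by
  exact (stdPhi_cont.integrableOn_Icc (a := -a) (b := a)).mono_set hsub

lemma integrableOn_sqphi (s : Set ℝ) (a : ℝ)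
    (hsub : s ⊆ Set.Icc (-a) a) :
    MeasureTheory.IntegrableOn (fun u : ℝ => u ^ 2 * stdPhi u) s := by
  exact (((continuous_pow 2).mul stdPhi_cont).integrableOn_Icc (a := -a) (b := a)).mono_set hsub

lemma Dfun_pos {t : ℝ} (ht : 0 < t) : 0 < Dfun t := by
  have h : (0:ℝ) < ∫ u in (-t)..t, stdPhi u := by
    apply intervalIntegral.intervalIntegral_pos_of_pos
    · exact (stdPhi_cont.intervalIntegrable _ _)
    · exact fun x => stdPhi_pos x
    · linarith
  rwa [intervalIntegral.integral_of_le (by linarith),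
    MeasureTheory.integral_Ioc_eq_integral_Ioo] at h

lemma Dfun_mono {s t : ℝ} (hs : 0 < s) (hst : s ≤ t) : Dfun s ≤ Dfun t := by
  apply MeasureTheory.setIntegral_mono_set
  · exact integrableOn_phi _ measurableSet_Ioo t Set.Ioo_subset_Icc_self
  · filter_upwards with x using (stdPhi_pos x).le
  · exact Filter.Eventually.of_forall (Set.Ioo_subset_Ioo (by linarith) hst)

lemma Nfun_le {s : ℝ} (hs : 0 < s) : Nfun s ≤ s ^ 2 * Dfun s := by
  rw [Nfun, Dfun, ← MeasureTheory.integral_const_mul]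
  apply MeasureTheory.setIntegral_mono_on
  · exact integrableOn_sqphi _ s Set.Ioo_subset_Icc_self
  · exact (integrableOn_phi _ measurableSet_Ioo s Set.Ioo_subset_Icc_self).const_mul _
  · exact measurableSet_Ioo
  · intro x hx
    have hx2 : x ^ 2 ≤ s ^ 2 := by
      have := abs_lt.2 ⟨hx.1, hx.2⟩
      nlinarith [abs_nonneg x, sq_abs x]
    exact mul_le_mul_of_nonneg_right hx2 (stdPhi_pos x).le

lemma Nfun_diff {s t : ℝ} (hs : 0 < s) (hst : s ≤ t) :
    s ^ 2 * (Dfun t - Dfun s) ≤ Nfun t - Nfun s := by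
  have hsub : Set.Ioo (-s) s ⊆ Set.Ioo (-t) t := Set.Ioo_subset_Ioo (by linarith) hst
  have hD : Dfun t - Dfun s = ∫ u in Set.Ioo (-t) t \ Set.Ioo (-s) s, stdPhi u := by
    rw [MeasureTheory.integral_diff measurableSet_Ioo
      (integrableOn_phi _ measurableSet_Ioo t Set.Ioo_subset_Icc_self) hsub]
    rfl
  have hN : Nfun t - Nfun s = ∫ u in Set.Ioo (-t) t \ Set.Ioo (-s) s, u ^ 2 * stdPhi u := by
    rw [MeasureTheory.integral_diff measurableSet_Ioo
      (integrableOn_sqphi _ t Set.Ioo_subset_Icc_self) hsub]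
    rfl
  rw [hD, hN, ← MeasureTheory.integral_const_mul]
  apply MeasureTheory.setIntegral_mono_on
  · exact (integrableOn_phi _ (measurableSet_Ioo.diff measurableSet_Ioo) t
      ((Set.diff_subset).trans Set.Ioo_subset_Icc_self)).const_mul _
  · exact integrableOn_sqphi _ t ((Set.diff_subset).trans Set.Ioo_subset_Icc_self)
  · exact measurableSet_Ioo.diff measurableSet_Ioo
  · intro x hx
    have hx2 : s ^ 2 ≤ x ^ 2 := by
      rcases hx with ⟨_, hxn⟩
      simp only [Set.mem_Ioo, not_and_or, not_lt] at hxn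
      rcases hxn with h | h <;> nlinarith
    exact mul_le_mul_of_nonneg_right hx2 (stdPhi_pos x).le

lemma Nfun_nonneg (s : ℝ) : 0 ≤ Nfun s := by
  apply MeasureTheory.setIntegral_nonneg measurableSet_Ioo
  intro x _
  exact mul_nonneg (sq_nonneg x) (stdPhi_pos x).le

lemma ratio_mono {s t : ℝ} (hs : 0 < s) (hst : s ≤ t) :
    Nfun s / Dfun s ≤ Nfun t / Dfun t := by
  have ht : 0 < t := lt_of_lt_of_le hs hst
  have hDs := Dfun_pos hs
  have hDt := Dfun_pos ht
  rw [div_le_div_iff₀ hDs hDt]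
  have h1 := Nfun_le hs
  have h2 := Nfun_diff hs hst
  have h3 := Dfun_mono hs hst
  nlinarith

lemma subst_den {l : ℝ} (hl : 0 < l) (a : ℝ) (ha : 0 ≤ a) :
    (∫ x in Set.Ioo (-a) a, (Real.sqrt l)⁻¹ * stdPhi ((Real.sqrt l)⁻¹ * x)) =
      Dfun ((Real.sqrt l)⁻¹ * a) := by
  set c := (Real.sqrt l)⁻¹ with hc
  have hc0 : 0 < c := by positivity
  have h1 : (∫ x in Set.Ioo (-a) a, c * stdPhi (c * x)) =
      ∫ x in (-a)..a, c * stdPhi (c * x) := by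
    rw [intervalIntegral.integral_of_le (by linarith),
      MeasureTheory.integral_Ioc_eq_integral_Ioo]
  rw [h1]
  have h2 : (∫ x in (-a)..a, c * stdPhi (c * x)) = c • ∫ x in (-a)..a, stdPhi (c * x) := by
    rw [← intervalIntegral.integral_smul]
    simp [smul_eq_mul]
  rw [h2, intervalIntegral.smul_integral_comp_mul_left stdPhi c, Dfun, mul_neg,
    intervalIntegral.integral_of_le (by nlinarith : -(c * a) ≤ c * a),
    MeasureTheory.integral_Ioc_eq_integral_Ioo]

lemma subst_num {l : ℝ} (hl : 0 < l) (a : ℝ) (ha : 0 ≤ a) :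
    (∫ x in Set.Ioo (-a) a, x ^ 2 * ((Real.sqrt l)⁻¹ * stdPhi ((Real.sqrt l)⁻¹ * x))) =
      l * Nfun ((Real.sqrt l)⁻¹ * a) := by
  set c := (Real.sqrt l)⁻¹ with hc
  have hc0 : 0 < c := by positivity
  have hcsq : c⁻¹ ^ 2 = l := by
    rw [hc, inv_inv, Real.sq_sqrt hl.le]
  have h1 : (∫ x in Set.Ioo (-a) a, x ^ 2 * (c * stdPhi (c * x))) =
      ∫ x in (-a)..a, x ^ 2 * (c * stdPhi (c * x)) := by
    rw [intervalIntegral.integral_of_le (by linarith),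
      MeasureTheory.integral_Ioc_eq_integral_Ioo]
  rw [h1]
  have h2 : ∀ x : ℝ, x ^ 2 * (c * stdPhi (c * x)) =
      (fun u => c⁻¹ * (u ^ 2 * stdPhi u)) (c * x) := by
    intro x
    field_simp
  rw [intervalIntegral.integral_congr (fun x _ => h2 x),
    intervalIntegral.integral_comp_mul_left (fun u => c⁻¹ * (u ^ 2 * stdPhi u)) hc0.ne',
    intervalIntegral.integral_const_mul]
  have h3 : (∫ x in c * (-a)..c * a, x ^ 2 * stdPhi x) = Nfun (c * a) := by
    rw [Nfun, mul_neg,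
      intervalIntegral.integral_of_le (by nlinarith : -(c * a) ≤ c * a),
      MeasureTheory.integral_Ioc_eq_integral_Ioo]
  rw [h3]
  simp only [smul_eq_mul]
  rw [← mul_assoc, ← sq, hcsq]

/-- For the N(0, λ) distribution truncated to (-√ρ, √ρ), the expectation
E(λ⁻¹X²) = λ⁻¹ · (∫ x² · λ^{-1/2}φ(λ^{-1/2}x)) / (∫ λ^{-1/2}φ(λ^{-1/2}x)) is
nonincreasing in λ on (0, ∞). -/
theorem stmt2 (ρ : ℝ) (hρ : 0 < ρ) :
    AntitoneOn (fun l : ℝ =>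
      (∫ x in Set.Ioo (-Real.sqrt ρ) (Real.sqrt ρ),
          x ^ 2 * ((Real.sqrt l)⁻¹ * stdPhi ((Real.sqrt l)⁻¹ * x))) /
        (l * ∫ x in Set.Ioo (-Real.sqrt ρ) (Real.sqrt ρ),
          (Real.sqrt l)⁻¹ * stdPhi ((Real.sqrt l)⁻¹ * x)))
      (Set.Ioi 0) := by
  intro l1 hl1 l2 hl2 h12
  simp only [Set.mem_Ioi] at hl1 hl2
  have ha : (0:ℝ) ≤ Real.sqrt ρ := Real.sqrt_nonneg ρ
  have ha0 : 0 < Real.sqrt ρ := Real.sqrt_pos.2 hρ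
  have key : ∀ l : ℝ, 0 < l →
      (∫ x in Set.Ioo (-Real.sqrt ρ) (Real.sqrt ρ),
          x ^ 2 * ((Real.sqrt l)⁻¹ * stdPhi ((Real.sqrt l)⁻¹ * x))) /
        (l * ∫ x in Set.Ioo (-Real.sqrt ρ) (Real.sqrt ρ),
          (Real.sqrt l)⁻¹ * stdPhi ((Real.sqrt l)⁻¹ * x)) =
      Nfun ((Real.sqrt l)⁻¹ * Real.sqrt ρ) / Dfun ((Real.sqrt l)⁻¹ * Real.sqrt ρ) := by
    intro l hl
    rw [subst_num hl _ ha, subst_den hl _ ha, mul_div_mul_left _ _ hl.ne']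
  simp only [key l1 hl1, key l2 hl2]
  have ht2le : (Real.sqrt l2)⁻¹ * Real.sqrt ρ ≤ (Real.sqrt l1)⁻¹ * Real.sqrt ρ := by
    have h := Real.sqrt_le_sqrt h12
    have h1 : 0 < Real.sqrt l1 := Real.sqrt_pos.2 hl1
    have := inv_anti₀ h1 h
    nlinarith
  have ht2pos : 0 < (Real.sqrt l2)⁻¹ * Real.sqrt ρ := by
    have : 0 < Real.sqrt l2 := Real.sqrt_pos.2 hl2
    positivity
  exact ratio_mono ht2pos ht2le
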